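/- arXiv:2109.06299 — 7 statements merged into one kernel-verified Lean document; each statement's English description precedes it below -/
import Mathlib

section
/- Let X, Y be topological spaces, Φ : X → 2^Y a multifunction, u : Gr(Φ) → ℝ∪{±∞}, and x ∈ Dom(Φ). If u is upper semicontinuous at each point of {x} × Φ(x) (as a function on Gr(Φ)) and Φ is lower semicontinuous at x, then the value function u*(z) = inf_{y ∈ Φ(z)} u(z,y) is upper semicontinuous at x. -/
/-!
Given `c` above the infimum at `x`, pick `y ∈ Φ x` with `u x y < c`. Upper semicontinuity gives a
box `U × V` around `(x, y)` on whose part in the graph `u < c`, and lower semicontinuity of `Φ`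
makes `Φ x'` meet `V` for `x'` near `x`; any such point of `Φ x'` pushes the infimum at `x'`
below `c`.
-/

open Filter Topology Set

theorem eventually_exists_mem_of_mem_nhdsWithin_graph {X Y : Type*} [TopologicalSpace X]
    [TopologicalSpace Y] {Φ : X → Set Y} {x : X}
    (hlsc : ∀ V : Set Y, IsOpen V → (Φ x ∩ V).Nonempty →
      ∀ᶠ x' in 𝓝 x, (Φ x' ∩ V).Nonempty)
    {y : Y} (hy : y ∈ Φ x) {W : Set (X × Y)} (hW : W ∈ 𝓝[{p | p.2 ∈ Φ p.1}] (x, y)) :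
    ∀ᶠ x' in 𝓝 x, ∃ y' ∈ Φ x', (x', y') ∈ W := by
  obtain ⟨O, hO, hxyO, hOW⟩ := mem_nhdsWithin.1 hW
  obtain ⟨U, V, hU, hV, hxU, hyV, hUV⟩ := isOpen_prod_iff.1 hO x y hxyO
  filter_upwards [hlsc V hV ⟨y, hy, hyV⟩, hU.mem_nhds hxU] with x' ⟨y', hy'Φ, hy'V⟩ hx'U
  exact ⟨y', hy'Φ, hOW ⟨hUV ⟨hx'U, hy'V⟩, hy'Φ⟩⟩

theorem stmt1_general {X Y : Type*} [TopologicalSpace X] [TopologicalSpace Y]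
    (Φ : X → Set Y) (u : X → Y → EReal) (x : X)
    (husc : ∀ y ∈ Φ x, UpperSemicontinuousWithinAt (fun p : X × Y => u p.1 p.2)
      {p : X × Y | p.2 ∈ Φ p.1} (x, y))
    (hlsc : ∀ V : Set Y, IsOpen V → (Φ x ∩ V).Nonempty →
      ∀ᶠ x' in 𝓝 x, (Φ x' ∩ V).Nonempty) :
    UpperSemicontinuousAt (fun z => ⨅ y ∈ Φ z, u z y) x := by
  intro c hc
  obtain ⟨y, hy, hyc⟩ : ∃ y ∈ Φ x, u x y < c := by
    simpa only [iInf_lt_iff, exists_prop] using hc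
  filter_upwards [eventually_exists_mem_of_mem_nhdsWithin_graph hlsc hy (husc y hy c hyc)]
    with x' ⟨y', hy'Φ, hy'c⟩
  exact (iInf₂_le y' hy'Φ).trans_lt hy'c

/-- If `u` is upper semicontinuous at each point of `{x} × Φ x` (with respect to the graph of `Φ`)
and the multifunction `Φ` is lower semicontinuous at `x`, then the value function
`z ↦ ⨅ y ∈ Φ z, u z y` is upper semicontinuous at `x`. -/
theorem stmt1 {X Y : Type*} [TopologicalSpace X] [TopologicalSpace Y]
    (Φ : X → Set Y) (u : X → Y → EReal) (x : X) (hx : (Φ x).Nonempty)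
    (husc : ∀ y ∈ Φ x, UpperSemicontinuousWithinAt (fun p : X × Y => u p.1 p.2)
      {p : X × Y | p.2 ∈ Φ p.1} (x, y))
    (hlsc : ∀ V : Set Y, IsOpen V → (Φ x ∩ V).Nonempty →
      ∀ᶠ x' in 𝓝 x, (Φ x' ∩ V).Nonempty) :
    UpperSemicontinuousAt (fun z => ⨅ y ∈ Φ z, u z y) x :=
  stmt1_general Φ u x husc hlsc
end

section
/- Let X, Y be topological spaces, Φ : X → 2^Y a multifunction, u : Gr(Φ) → ℝ∪{±∞}, and x ∈ Dom(Φ). The value function u*(z) = inf_{y ∈ Φ(z)} u(z,y) is upper semicontinuous at x if and only if u is feasible path transfer upper semicontinuous at x, i.e., for each y ∈ Φ(x) and γ ∈ ℝ with u(x,y) < γ, there is a neighborhood U(x) such that for each x' ∈ U(x) there exists y' ∈ Φ(x') with u(x',y') < γ. -/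
open Filter Topology Set

theorem upperSemicontinuousAt_iff_forall_real {X : Type*} [TopologicalSpace X] {f : X → EReal}
    {x : X} :
    UpperSemicontinuousAt f x ↔ ∀ γ : ℝ, f x < γ → ∀ᶠ x' in 𝓝 x, f x' < γ := by
  refine ⟨fun h γ hγ => h γ hγ, fun h c hc => ?_⟩
  obtain ⟨γ, hxγ, hγc⟩ := EReal.exists_between_coe_real hc
  filter_upwards [h γ hxγ] with x' hx' using hx'.trans hγc

theorem biInf_lt_iff_exists_lt {ι α : Type*} [CompleteLinearOrder α] {s : Set ι} {f : ι → α}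
    {c : α} : (⨅ i ∈ s, f i) < c ↔ ∃ i ∈ s, f i < c := by
  simp only [iInf_lt_iff, exists_prop]

theorem stmt3_general {X Y : Type*} [TopologicalSpace X]
    (Φ : X → Set Y) (u : X → Y → EReal) (x : X) :
    UpperSemicontinuousAt (fun z => ⨅ y ∈ Φ z, u z y) x ↔
      ∀ y ∈ Φ x, ∀ γ : ℝ, u x y < (γ : EReal) →
        ∀ᶠ x' in 𝓝 x, ∃ y' ∈ Φ x', u x' y' < (γ : EReal) := by
  simp only [upperSemicontinuousAt_iff_forall_real, biInf_lt_iff_exists_lt]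
  exact ⟨fun h y hy γ hγ => h γ ⟨y, hy, hγ⟩, fun h γ ⟨y, hy, hγ⟩ => h y hy γ hγ⟩

/-- The value function `z ↦ ⨅ y ∈ Φ z, u z y` is upper semicontinuous at `x` if and only if `u`
is feasible path transfer upper semicontinuous at `x`: for each `y ∈ Φ x` and real `γ` with
`u x y < γ` there is a neighborhood of `x` on which each point `x'` admits some `y' ∈ Φ x'` with
`u x' y' < γ`. -/
theorem stmt3 {X Y : Type*} [TopologicalSpace X] [TopologicalSpace Y]
    (Φ : X → Set Y) (u : X → Y → EReal) (x : X) (hx : (Φ x).Nonempty) :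
    UpperSemicontinuousAt (fun z => ⨅ y ∈ Φ z, u z y) x ↔
      ∀ y ∈ Φ x, ∀ γ : ℝ, u x y < (γ : EReal) →
        ∀ᶠ x' in 𝓝 x, ∃ y' ∈ Φ x', u x' y' < (γ : EReal) :=
  stmt3_general Φ u x
end

section
/- Let X, Y be topological spaces, Φ : X → 2^Y a multifunction, u : Gr(Φ) → ℝ∪{±∞}, and x ∈ Dom(Φ). The value function u*(z) = inf_{y ∈ Φ(z)} u(z,y) is continuous at x and the infimum at x is attained if and only if u is feasible path transfer upper semicontinuous at x and lower min-semicontinuous at x. -/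
/-!
As `ℝ` is dense in `EReal`, semicontinuity of `v z = ⨅ y ∈ Φ z, u z y` may be tested against
real thresholds only. Then upper semicontinuity of `v` at `x` is literally feasible path transfer
upper semicontinuity, since `v x < γ` means `u x y < γ` for some feasible `y`. A witness `y*` of
lower min-semicontinuity, evaluated at `x` itself, is a minimiser, and once `u x y* = v x` the
two lower conditions differ only by interpolating one more real threshold.
-/

open Filter Topology Set

section ValueFunction

variable {X Y : Type*} [TopologicalSpace X]

def FeasiblePathTransferUpperSemicontinuousAt (Φ : X → Set Y) (u : X → Y → EReal) (x : X) :
    Prop :=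
  ∀ y ∈ Φ x, ∀ γ : ℝ, u x y < γ → ∀ᶠ x' in 𝓝 x, ∃ y' ∈ Φ x', u x' y' < γ

def LowerMinSemicontinuousAt (Φ : X → Set Y) (u : X → Y → EReal) (x : X) : Prop :=
  ∃ ys ∈ Φ x, ∀ γ : ℝ, γ < u x ys → ∀ᶠ x' in 𝓝 x, ∀ y' ∈ Φ x', γ < u x' y'

theorem EReal.lowerSemicontinuousAt_iff_forall_coe {f : X → EReal} {x : X} :
    LowerSemicontinuousAt f x ↔ ∀ γ : ℝ, γ < f x → ∀ᶠ x' in 𝓝 x, γ < f x' := by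
  refine ⟨fun h γ hγ => h γ hγ, fun h b hb => ?_⟩
  obtain ⟨γ, hbγ, hγ⟩ := EReal.exists_between_coe_real hb
  filter_upwards [h γ hγ] with x' hx' using hbγ.trans hx'

theorem EReal.upperSemicontinuousAt_iff_forall_coe {f : X → EReal} {x : X} :
    UpperSemicontinuousAt f x ↔ ∀ γ : ℝ, f x < γ → ∀ᶠ x' in 𝓝 x, f x' < γ := by
  refine ⟨fun h γ hγ => h γ hγ, fun h b hb => ?_⟩
  obtain ⟨γ, hγ, hγb⟩ := EReal.exists_between_coe_real hb
  filter_upwards [h γ hγ] with x' hx' using hx'.trans hγb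

theorem iInf₂_mem_lt_iff {α : Type*} [CompleteLinearOrder α] {s : Set Y} {g : Y → α} {a : α} :
    ⨅ y ∈ s, g y < a ↔ ∃ y ∈ s, g y < a := by
  simp only [iInf_lt_iff, exists_prop]

theorem upperSemicontinuousAt_biInf_iff {Φ : X → Set Y} {u : X → Y → EReal} {x : X} :
    UpperSemicontinuousAt (fun z => ⨅ y ∈ Φ z, u z y) x ↔
      FeasiblePathTransferUpperSemicontinuousAt Φ u x := by
  simp only [EReal.upperSemicontinuousAt_iff_forall_coe, iInf₂_mem_lt_iff,
    FeasiblePathTransferUpperSemicontinuousAt]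
  exact ⟨fun h y hy γ hγ => h γ ⟨y, hy, hγ⟩, fun h γ ⟨y, hy, hγ⟩ => h y hy γ hγ⟩

theorem EReal.biInf_eq_of_forall_coe_lt {s : Set Y} {g : Y → EReal} {ys : Y} (hys : ys ∈ s)
    (h : ∀ γ : ℝ, γ < g ys → ∀ y ∈ s, γ < g y) :
    ⨅ y ∈ s, g y = g ys :=
  le_antisymm (iInf₂_le ys hys) <| le_iInf₂ fun y hy =>
    EReal.ge_of_forall_gt_iff_ge.mp fun γ hγ => (h γ hγ y hy).le

theorem lowerMinSemicontinuousAt_iff {Φ : X → Set Y} {u : X → Y → EReal} {x : X} :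
    LowerMinSemicontinuousAt Φ u x ↔
      LowerSemicontinuousAt (fun z => ⨅ y ∈ Φ z, u z y) x ∧
        ∃ y ∈ Φ x, u x y = ⨅ y' ∈ Φ x, u x y' := by
  simp only [EReal.lowerSemicontinuousAt_iff_forall_coe]
  constructor
  · rintro ⟨ys, hys, h⟩
    have hmin := EReal.biInf_eq_of_forall_coe_lt hys fun γ hγ => (h γ hγ).self_of_nhds
    refine ⟨fun γ hγ => ?_, ys, hys, hmin.symm⟩
    rw [hmin] at hγ
    obtain ⟨γ', hγγ', hγ'⟩ := EReal.exists_between_coe_real hγ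
    filter_upwards [h γ' hγ'] with x' hx'
    exact hγγ'.trans_le (le_iInf₂ fun y' hy' => (hx' y' hy').le)
  · rintro ⟨hlsc, ys, hys, hmin⟩
    refine ⟨ys, hys, fun γ hγ => ?_⟩
    filter_upwards [hlsc γ (hmin ▸ hγ)] with x' hx' y' hy'
    exact hx'.trans_le (iInf₂_le y' hy')

end ValueFunction

theorem stmt9_general {X Y : Type*} [TopologicalSpace X]
    (Φ : X → Set Y) (u : X → Y → EReal) (x : X) :
    (LowerSemicontinuousAt (fun z => ⨅ y ∈ Φ z, u z y) x ∧
      UpperSemicontinuousAt (fun z => ⨅ y ∈ Φ z, u z y) x ∧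
      ∃ y ∈ Φ x, u x y = ⨅ y' ∈ Φ x, u x y') ↔
    ((∀ y ∈ Φ x, ∀ γ : ℝ, u x y < (γ : EReal) →
        ∀ᶠ x' in 𝓝 x, ∃ y' ∈ Φ x', u x' y' < (γ : EReal)) ∧
      (∃ ys ∈ Φ x, ∀ γ : ℝ, (γ : EReal) < u x ys →
        ∀ᶠ x' in 𝓝 x, ∀ y' ∈ Φ x', (γ : EReal) < u x' y')) := by
  change _ ↔ FeasiblePathTransferUpperSemicontinuousAt Φ u x ∧ LowerMinSemicontinuousAt Φ u x
  rw [← upperSemicontinuousAt_biInf_iff, lowerMinSemicontinuousAt_iff]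
  exact and_left_comm

/-- The value function `z ↦ ⨅ y ∈ Φ z, u z y` is continuous (both lower and upper
semicontinuous) at `x` and its infimum at `x` is attained, if and only if `u` is feasible path
transfer upper semicontinuous at `x` and lower min-semicontinuous at `x`. -/
theorem stmt9 {X Y : Type*} [TopologicalSpace X] [TopologicalSpace Y]
    (Φ : X → Set Y) (u : X → Y → EReal) (x : X) (hx : (Φ x).Nonempty) :
    (LowerSemicontinuousAt (fun z => ⨅ y ∈ Φ z, u z y) x ∧
      UpperSemicontinuousAt (fun z => ⨅ y ∈ Φ z, u z y) x ∧
      ∃ y ∈ Φ x, u x y = ⨅ y' ∈ Φ x, u x y') ↔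
    ((∀ y ∈ Φ x, ∀ γ : ℝ, u x y < (γ : EReal) →
        ∀ᶠ x' in 𝓝 x, ∃ y' ∈ Φ x', u x' y' < (γ : EReal)) ∧
      (∃ ys ∈ Φ x, ∀ γ : ℝ, (γ : EReal) < u x ys →
        ∀ᶠ x' in 𝓝 x, ∀ y' ∈ Φ x', (γ : EReal) < u x' y')) :=
  stmt9_general Φ u x
end

section
/- Let X and Y be metric spaces, Φ : X → 2^Y a multifunction, u : Gr(Φ) → ℝ∪{±∞}, and E ⊆ Dom(Φ). Then u is KN-inf-compact on Gr_E(Φ) (sequential version) if and only if for every sequence (x_n, y_n) in Gr(Φ) with x_n → x ∈ E and liminf_{n→∞} u(x_n, y_n) < +∞, there exists a subsequence (y_{n_k}) converging to some y ∈ Φ(x) with u(x,y) ≤ liminf_{n→∞} u(x_n, y_n). -/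
/-!
Pass to a subsequence along which `u (xₙ, yₙ)` converges to its liminf; once the liminf is finite
this subsequence is eventually bounded above by a real constant, so inf-compactness yields a limit
point `y ∈ Φ x` of it, and lower semicontinuity along a further subsequence converging to `y`
bounds `u (x, y)` by the liminf. Conversely, uniqueness of limits in `Y` gives lower semicontinuity,
and a real upper bound makes the liminf finite.
-/

open Filter Topology

theorem EReal.exists_strictMono_tendsto_liminf_of_liminf_lt_top {v : ℕ → EReal}
    (hv : liminf v atTop < ⊤) :
    ∃ φ : ℕ → ℕ, StrictMono φ ∧ Tendsto (v ∘ φ) atTop (𝓝 (liminf v atTop)) ∧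
      ∃ C : ℝ, ∀ k, v (φ k) ≤ C := by
  obtain ⟨φ, hφ, hlim⟩ := (MapClusterPt.liminf (f := atTop) (u := v)).tendsto_subseq
  obtain ⟨C, hC, -⟩ := EReal.exists_between_coe_real hv
  obtain ⟨N, hN⟩ := eventually_atTop.1 (hlim.eventually_le_const hC)
  exact ⟨fun k => φ (k + N), hφ.comp (strictMono_id.add_const N),
    hlim.comp (tendsto_add_atTop_nat N), C, fun k => hN _ (Nat.le_add_left N k)⟩

section GraphConditions

variable {X Y : Type*} [TopologicalSpace X] [TopologicalSpace Y]

def SeqLowerSemicontinuousOnGraph (Φ : X → Set Y) (u : X → Y → EReal) (E : Set X) : Prop :=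
  ∀ x ∈ E, ∀ y ∈ Φ x, ∀ xn : ℕ → X, ∀ yn : ℕ → Y,
    (∀ n, yn n ∈ Φ (xn n)) → Tendsto xn atTop (𝓝 x) → Tendsto yn atTop (𝓝 y) →
    u x y ≤ liminf (fun n => u (xn n) (yn n)) atTop

/-- Sequential KN-inf-compactness on `Gr_E(Φ)` is the conjunction of this condition with
`SeqLowerSemicontinuousOnGraph`. -/
def SeqInfCompactOnGraph (Φ : X → Set Y) (u : X → Y → EReal) (E : Set X) : Prop :=
  ∀ x ∈ E, ∀ xn : ℕ → X, ∀ yn : ℕ → Y, (∀ n, yn n ∈ Φ (xn n)) →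
    Tendsto xn atTop (𝓝 x) → (∃ C : ℝ, ∀ n, u (xn n) (yn n) ≤ (C : EReal)) →
    ∃ y ∈ Φ x, MapClusterPt y atTop yn

def HasSubseqTendstoLeLiminf (Φ : X → Set Y) (u : X → Y → EReal) (E : Set X) : Prop :=
  ∀ x ∈ E, ∀ xn : ℕ → X, ∀ yn : ℕ → Y, (∀ n, yn n ∈ Φ (xn n)) →
    Tendsto xn atTop (𝓝 x) → liminf (fun n => u (xn n) (yn n)) atTop < ⊤ →
    ∃ φ : ℕ → ℕ, StrictMono φ ∧ ∃ y ∈ Φ x, Tendsto (fun k => yn (φ k)) atTop (𝓝 y) ∧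
      u x y ≤ liminf (fun n => u (xn n) (yn n)) atTop

variable {Φ : X → Set Y} {u : X → Y → EReal} {E : Set X}

theorem SeqLowerSemicontinuousOnGraph.hasSubseqTendstoLeLiminf [FirstCountableTopology Y]
    (hlsc : SeqLowerSemicontinuousOnGraph Φ u E) (hcomp : SeqInfCompactOnGraph Φ u E) :
    HasSubseqTendstoLeLiminf Φ u E := by
  intro x hx xn yn hmem hxn hfin
  obtain ⟨φ, hφ, hlim, hbdd⟩ := EReal.exists_strictMono_tendsto_liminf_of_liminf_lt_top hfin
  obtain ⟨y, hy, hclus⟩ :=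
    hcomp x hx (xn ∘ φ) (yn ∘ φ) (fun k => hmem _) (hxn.comp hφ.tendsto_atTop) hbdd
  obtain ⟨ψ, hψ, hyψ⟩ := hclus.tendsto_subseq
  refine ⟨φ ∘ ψ, hφ.comp hψ, y, hy, hyψ, ?_⟩
  calc u x y ≤ liminf (fun k => u (xn (φ (ψ k))) (yn (φ (ψ k)))) atTop :=
        hlsc x hx y hy _ _ (fun k => hmem _) (hxn.comp (hφ.comp hψ).tendsto_atTop) hyψ
    _ = liminf (fun n => u (xn n) (yn n)) atTop := (hlim.comp hψ.tendsto_atTop).liminf_eq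

theorem HasSubseqTendstoLeLiminf.seqLowerSemicontinuousOnGraph [T2Space Y]
    (h : HasSubseqTendstoLeLiminf Φ u E) : SeqLowerSemicontinuousOnGraph Φ u E := by
  intro x hx y _ xn yn hmem hxn hyn
  rcases lt_or_ge (liminf (fun n => u (xn n) (yn n)) atTop) ⊤ with hfin | htop
  · obtain ⟨φ, hφ, y', _, hy', hle⟩ := h x hx xn yn hmem hxn hfin
    rwa [tendsto_nhds_unique hy' (hyn.comp hφ.tendsto_atTop)] at hle
  · exact le_top.trans htop

theorem HasSubseqTendstoLeLiminf.seqInfCompactOnGraph (h : HasSubseqTendstoLeLiminf Φ u E) :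
    SeqInfCompactOnGraph Φ u E := by
  rintro x hx xn yn hmem hxn ⟨C, hC⟩
  have hfin : liminf (fun n => u (xn n) (yn n)) atTop < ⊤ :=
    (liminf_le_of_frequently_le (Frequently.of_forall hC)).trans_lt (EReal.coe_lt_top C)
  obtain ⟨φ, hφ, y, hy, hyφ, -⟩ := h x hx xn yn hmem hxn hfin
  exact ⟨y, hy, hyφ.mapClusterPt.of_comp hφ.tendsto_atTop⟩

end GraphConditions

theorem stmt13_general {X Y : Type*} [MetricSpace X] [MetricSpace Y]
    (Φ : X → Set Y) (u : X → Y → EReal) (E : Set X) :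
    ((∀ x ∈ E, ∀ y ∈ Φ x, ∀ xn : ℕ → X, ∀ yn : ℕ → Y,
        (∀ n, yn n ∈ Φ (xn n)) → Tendsto xn atTop (𝓝 x) → Tendsto yn atTop (𝓝 y) →
        u x y ≤ liminf (fun n => u (xn n) (yn n)) atTop) ∧
      (∀ x ∈ E, ∀ xn : ℕ → X, ∀ yn : ℕ → Y, (∀ n, yn n ∈ Φ (xn n)) →
        Tendsto xn atTop (𝓝 x) → (∃ C : ℝ, ∀ n, u (xn n) (yn n) ≤ (C : EReal)) →
        ∃ y ∈ Φ x, MapClusterPt y atTop yn)) ↔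
    (∀ x ∈ E, ∀ xn : ℕ → X, ∀ yn : ℕ → Y, (∀ n, yn n ∈ Φ (xn n)) →
      Tendsto xn atTop (𝓝 x) → liminf (fun n => u (xn n) (yn n)) atTop < ⊤ →
      ∃ φ : ℕ → ℕ, StrictMono φ ∧ ∃ y ∈ Φ x, Tendsto (fun k => yn (φ k)) atTop (𝓝 y) ∧
        u x y ≤ liminf (fun n => u (xn n) (yn n)) atTop) :=
  ⟨fun ⟨hlsc, hcomp⟩ =>
      SeqLowerSemicontinuousOnGraph.hasSubseqTendstoLeLiminf hlsc hcomp,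
    fun h =>
      ⟨HasSubseqTendstoLeLiminf.seqLowerSemicontinuousOnGraph h,
        HasSubseqTendstoLeLiminf.seqInfCompactOnGraph h⟩⟩

/-- For metric spaces `X` and `Y`, `u` is sequentially `KN`-inf-compact on `Gr_E(Φ)` if and only
if for every sequence `(x_n, y_n)` in the graph of `Φ` with `x_n → x ∈ E` and
`liminf u x_n y_n < +∞`, there is a subsequence of `(y_n)` converging to some `y ∈ Φ x` with
`u x y ≤ liminf u x_n y_n`. -/
theorem stmt13 {X Y : Type*} [MetricSpace X] [MetricSpace Y]
    (Φ : X → Set Y) (u : X → Y → EReal) (E : Set X) (hE : E ⊆ {z | (Φ z).Nonempty}) :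
    ((∀ x ∈ E, ∀ y ∈ Φ x, ∀ xn : ℕ → X, ∀ yn : ℕ → Y,
        (∀ n, yn n ∈ Φ (xn n)) → Tendsto xn atTop (𝓝 x) → Tendsto yn atTop (𝓝 y) →
        u x y ≤ liminf (fun n => u (xn n) (yn n)) atTop) ∧
      (∀ x ∈ E, ∀ xn : ℕ → X, ∀ yn : ℕ → Y, (∀ n, yn n ∈ Φ (xn n)) →
        Tendsto xn atTop (𝓝 x) → (∃ C : ℝ, ∀ n, u (xn n) (yn n) ≤ (C : EReal)) →
        ∃ y ∈ Φ x, MapClusterPt y atTop yn)) ↔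
    (∀ x ∈ E, ∀ xn : ℕ → X, ∀ yn : ℕ → Y, (∀ n, yn n ∈ Φ (xn n)) →
      Tendsto xn atTop (𝓝 x) → liminf (fun n => u (xn n) (yn n)) atTop < ⊤ →
      ∃ φ : ℕ → ℕ, StrictMono φ ∧ ∃ y ∈ Φ x, Tendsto (fun k => yn (φ k)) atTop (𝓝 y) ∧
        u x y ≤ liminf (fun n => u (xn n) (yn n)) atTop) :=
  stmt13_general Φ u E
end

section
/- Define X = [0,1], Y = [0,1], Φ(x) = [0,1] for all x, and u(x,y) = 1_{ℚ}(x−y) + 1_{{0}}(y) + y (where 1_S is the indicator of S). Then the value function u*(x) = inf_{y ∈ [0,1]} u(x,y) equals 0 for every x ∈ [0,1], and for every x ∈ [0,1] there is no y ∈ [0,1] with u(x,y) = 0; consequently u is lower inf-semicontinuous everywhere but lower min-semicontinuous nowhere. -/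
open Filter Topology Set

private lemma stmt14_pos (u : ℝ → ℝ → ℝ)
    (hu : ∀ x y : ℝ, u x y =
      Set.indicator {z : ℝ | ∃ q : ℚ, (q : ℝ) = z} (fun _ => (1 : ℝ)) (x - y) +
      Set.indicator {(0 : ℝ)} (fun _ => (1 : ℝ)) y + y) :
    ∀ x y : ℝ, y ∈ Set.Icc (0 : ℝ) 1 → 0 < u x y := by
  intro x y hy
  rw [hu]
  have h1 : (0:ℝ) ≤ Set.indicator {z : ℝ | ∃ q : ℚ, (q : ℝ) = z} (fun _ => (1:ℝ)) (x - y) :=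
    Set.indicator_nonneg (fun _ _ => by norm_num) _
  rcases eq_or_lt_of_le hy.1 with h | h
  · subst h
    rw [sub_zero] at h1
    simp
    linarith
  · have h2 : (0:ℝ) ≤ Set.indicator {(0:ℝ)} (fun _ => (1:ℝ)) y :=
      Set.indicator_nonneg (fun _ _ => by norm_num) _
    linarith

private lemma stmt14_small (u : ℝ → ℝ → ℝ)
    (hu : ∀ x y : ℝ, u x y =
      Set.indicator {z : ℝ | ∃ q : ℚ, (q : ℝ) = z} (fun _ => (1 : ℝ)) (x - y) +
      Set.indicator {(0 : ℝ)} (fun _ => (1 : ℝ)) y + y) :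
    ∀ x ε : ℝ, 0 < ε → ∃ y ∈ Set.Icc (0:ℝ) 1, u x y < ε := by
  intro x ε hε
  have hδ : (0:ℝ) < min ε 1 := lt_min hε one_pos
  have key : ∀ y : ℝ, y ∈ Set.Ioo (0:ℝ) (min ε 1) → Irrational (x - y) → u x y < ε := by
    intro y hy hirr
    have h1 : (x - y) ∉ {z : ℝ | ∃ q : ℚ, (q : ℝ) = z} := by
      intro ⟨q, hq⟩
      exact hirr ⟨q, hq⟩
    have h2 : y ∉ ({(0:ℝ)} : Set ℝ) := by
      simp only [Set.mem_singleton_iff]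
      exact ne_of_gt hy.1
    rw [hu, Set.indicator_of_notMem h1, Set.indicator_of_notMem h2]
    simpa using lt_of_lt_of_le hy.2 (min_le_left _ _)
  by_cases hx : ∃ q : ℚ, (q : ℝ) = x
  · obtain ⟨q, hq⟩ := hx
    obtain ⟨y, hyirr, hy⟩ := exists_irrational_btwn hδ
    refine ⟨y, ⟨hy.1.le, le_trans hy.2.le (min_le_right _ _)⟩, key y hy ?_⟩
    rw [← hq]
    exact hyirr.ratCast_sub q
  · obtain ⟨p, hp0, hp1⟩ := exists_rat_btwn hδ
    have hp0' : (0:ℝ) < (p:ℝ) := hp0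
    refine ⟨(p:ℝ), ⟨hp0'.le, le_trans hp1.le (min_le_right _ _)⟩,
      key _ ⟨hp0', hp1⟩ ?_⟩
    have hxirr : Irrational x := by
      rw [Irrational]
      intro ⟨q, hq⟩
      exact hx ⟨q, hq⟩
    exact hxirr.sub_ratCast p

/-- For `X = Y = [0,1]`, `Φ ≡ [0,1]`, and `u x y = 1_ℚ(x−y) + 1_{0}(y) + y`: the value function
is identically `0`, the infimum is never attained; consequently `u` is lower inf-semicontinuous
everywhere but lower min-semicontinuous nowhere. -/
theorem stmt14 (u : ℝ → ℝ → ℝ)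
    (hu : ∀ x y : ℝ, u x y =
      Set.indicator {z : ℝ | ∃ q : ℚ, (q : ℝ) = z} (fun _ => (1 : ℝ)) (x - y) +
      Set.indicator {(0 : ℝ)} (fun _ => (1 : ℝ)) y + y) :
    (∀ x ∈ Set.Icc (0 : ℝ) 1, sInf (u x '' Set.Icc (0 : ℝ) 1) = 0) ∧
    (∀ x ∈ Set.Icc (0 : ℝ) 1, ∀ y ∈ Set.Icc (0 : ℝ) 1, u x y ≠ 0) ∧
    (∀ x ∈ Set.Icc (0 : ℝ) 1, ∀ γ : ℝ, (∀ y ∈ Set.Icc (0 : ℝ) 1, γ < u x y) →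
      ∀ᶠ x' in 𝓝[Set.Icc (0 : ℝ) 1] x, ∀ y' ∈ Set.Icc (0 : ℝ) 1, γ < u x' y') ∧
    (∀ x ∈ Set.Icc (0 : ℝ) 1, ¬ ∃ ys ∈ Set.Icc (0 : ℝ) 1, ∀ γ : ℝ, γ < u x ys →
      ∀ᶠ x' in 𝓝[Set.Icc (0 : ℝ) 1] x, ∀ y' ∈ Set.Icc (0 : ℝ) 1, γ < u x' y') := by
  have hpos := stmt14_pos u hu
  have hsmall := stmt14_small u hu
  refine ⟨?_, ?_, ?_, ?_⟩
  · intro x _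
    have hne : (u x '' Set.Icc (0:ℝ) 1).Nonempty :=
      ⟨u x 0, Set.mem_image_of_mem _ (by norm_num)⟩
    have hbdd : BddBelow (u x '' Set.Icc (0:ℝ) 1) := by
      refine ⟨0, ?_⟩
      rintro z ⟨y, hy, rfl⟩
      exact (hpos x y hy).le
    refine le_antisymm ?_ (le_csInf hne ?_)
    · rw [Real.sInf_le_iff hbdd hne]
      intro ε hε
      obtain ⟨y, hy, hlt⟩ := hsmall x ε hε
      exact ⟨u x y, Set.mem_image_of_mem _ hy, by linarith⟩
    · rintro z ⟨y, hy, rfl⟩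
      exact (hpos x y hy).le
  · intro x _ y hy
    exact ne_of_gt (hpos x y hy)
  · intro x _ γ hγ
    have hγ0 : γ ≤ 0 := by
      by_contra h
      push_neg at h
      obtain ⟨y, hy, hlt⟩ := hsmall x γ h
      exact absurd (hγ y hy) (not_lt.mpr hlt.le)
    exact Filter.Eventually.of_forall fun x' y' hy' => lt_of_le_of_lt hγ0 (hpos x' y' hy')
  · rintro x hx ⟨ys, hys, H⟩
    have hc : 0 < u x ys := hpos x ys hys
    have hev := H (u x ys / 2) (by linarith)
    have hatx : ∀ y' ∈ Set.Icc (0:ℝ) 1, u x ys / 2 < u x y' :=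
      hev.self_of_nhdsWithin hx
    obtain ⟨y, hy, hlt⟩ := hsmall x (u x ys / 2) (by linarith)
    exact absurd (hatx y hy) (not_lt.mpr hlt.le)
end

section
/- Define X = ℝ, Y = [0,∞), Φ(x) = Y for all x, and u(x,y) = 1 + y if x ≤ 0 or (x > 0 and 0 ≤ y ≤ 1/(2x)); u(x,y) = 2 + 1/x − (2x+1)y if x > 0 and 1/(2x) < y ≤ 1/x; u(x,y) = y − 1/x if x > 0 and y > 1/x. Then u is continuous on X × Y, the sets {y : u(x,y) ≤ λ} are compact for every x ∈ X and λ ∈ ℝ, yet the value function u*(x) = inf_{y ≥ 0} u(x,y) equals 1 for x ≤ 0 and 0 for x > 0, and hence is not lower semicontinuous at 0. -/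
open Filter Topology Set

noncomputable def vasF : ℝ × ℝ → ℝ := fun p =>
  if p.1 * p.2 ≤ 1/2 then 1 + p.2
  else if p.1 * p.2 ≤ 1 then 2 + 1/p.1 - (2*p.1+1)*p.2
  else p.2 - 1/p.1

noncomputable def vasG : ℝ × ℝ → ℝ := fun p =>
  min (1 + p.2) (max (p.2 - 1/p.1) (2 + 1/p.1 - (2*p.1+1)*p.2))

lemma vasF_eq_G (p : ℝ × ℝ) (hx : 0 < p.1) : vasF p = vasG p := by
  obtain ⟨x, y⟩ := p
  simp only at hx
  have hx' : x ≠ 0 := hx.ne'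
  have hinv : x * (1/x) = 1 := mul_one_div_cancel hx'
  unfold vasF vasG
  simp only
  split_ifs with hA hB
  · -- x*y ≤ 1/2 : min = 1+y since max ≥ A ≥ 1+y
    have hA' : 2 + 1/x - (2*x+1)*y ≥ 1 + y := by
      rw [ge_iff_le, ← sub_nonneg]
      have key : x * ((2 + 1/x - (2*x+1)*y) - (1 + y)) = (x+1) * (1 - 2*(x*y)) := by
        field_simp; ring
      nlinarith [mul_pos hx (show (0:ℝ) < 1 - 2*(x*y) + 1 by nlinarith)]
    rw [min_eq_left]
    exact le_trans hA' (le_max_right _ _)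
  · -- 1/2 < x*y ≤ 1 : value A
    push_neg at hA
    have h1 : 2 + 1/x - (2*x+1)*y ≤ 1 + y := by
      rw [← sub_nonneg]
      nlinarith [mul_pos hx (show (0:ℝ) < 2*(x*y) - 1 + 1 by nlinarith)]
    have h2 : y - 1/x ≤ 2 + 1/x - (2*x+1)*y := by
      rw [← sub_nonneg]
      nlinarith
    rw [max_eq_right h2, min_eq_right h1]
  · -- x*y > 1 : value y - 1/x
    push_neg at hA hB
    have h2 : 2 + 1/x - (2*x+1)*y ≤ y - 1/x := by
      rw [← sub_nonneg]
      nlinarith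
    have h3 : y - 1/x ≤ 1 + y := by nlinarith [one_div_pos.mpr hx]
    rw [max_eq_left h2, min_eq_right h3]

lemma vasF_contAt (p : ℝ × ℝ) (hp : 0 ≤ p.2) : ContinuousAt vasF p := by
  rcases lt_or_ge 0 p.1 with hx | hx
  · have hopen : IsOpen {q : ℝ × ℝ | 0 < q.1} := isOpen_lt continuous_const continuous_fst
    have hG : ContinuousAt vasG p := by
      have h1 : ContinuousAt (fun q : ℝ × ℝ => 1 / q.1) p :=
        ContinuousAt.div continuousAt_const continuousAt_fst hx.ne'
      exact (((continuousAt_const.add continuousAt_snd)).min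
        (((continuousAt_snd.sub h1)).max
          ((continuousAt_const.add h1).sub
            (((continuousAt_const.mul continuousAt_fst).add continuousAt_const).mul
              continuousAt_snd))))
    apply hG.congr
    filter_upwards [hopen.mem_nhds hx] with q hq
    exact (vasF_eq_G q hq).symm
  · have hlt : p.1 * p.2 < 1/2 := lt_of_le_of_lt (mul_nonpos_of_nonpos_of_nonneg hx hp) (by norm_num)
    have hopen : IsOpen {q : ℝ × ℝ | q.1 * q.2 < 1/2} :=
      isOpen_lt (continuous_fst.mul continuous_snd) continuous_const
    have hc : ContinuousAt (fun q : ℝ × ℝ => 1 + q.2) p :=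
      continuousAt_const.add continuousAt_snd
    apply hc.congr
    filter_upwards [hopen.mem_nhds hlt] with q hq
    simp only [vasF]
    rw [if_pos hq.le]
/-- Vasquez's counterexample: the piecewise function `u` on `ℝ × [0,∞)` is continuous and
inf-compact in `y`, yet its value function equals `1` for `x ≤ 0` and `0` for `x > 0`, hence is
not lower semicontinuous at `0`. -/
theorem stmt15 (u : ℝ → ℝ → ℝ)
    (h1 : ∀ x y : ℝ, 0 ≤ y → (x ≤ 0 ∨ (0 < x ∧ y ≤ 1 / (2 * x))) → u x y = 1 + y)
    (h2 : ∀ x y : ℝ, 0 < x → 1 / (2 * x) < y → y ≤ 1 / x →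
      u x y = 2 + 1 / x - (2 * x + 1) * y)
    (h3 : ∀ x y : ℝ, 0 < x → 1 / x < y → u x y = y - 1 / x) :
    ContinuousOn (fun p : ℝ × ℝ => u p.1 p.2) {p : ℝ × ℝ | 0 ≤ p.2} ∧
    (∀ x lam : ℝ, IsCompact {y : ℝ | 0 ≤ y ∧ u x y ≤ lam}) ∧
    (∀ x : ℝ, x ≤ 0 → sInf (u x '' Set.Ici (0 : ℝ)) = 1) ∧
    (∀ x : ℝ, 0 < x → sInf (u x '' Set.Ici (0 : ℝ)) = 0) ∧
    ¬ LowerSemicontinuousAt (fun x : ℝ => sInf (u x '' Set.Ici (0 : ℝ))) 0 := by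
  -- u agrees with vasF on the domain
  have key : ∀ x y : ℝ, 0 ≤ y → u x y = vasF (x, y) := by
    intro x y hy
    rcases le_or_gt x 0 with hx | hx
    · have hle : x * y ≤ 1/2 :=
        le_trans (mul_nonpos_of_nonpos_of_nonneg hx hy) (by norm_num)
      rw [h1 x y hy (Or.inl hx)]
      simp only [vasF]; rw [if_pos hle]
    · have hx2 : (0:ℝ) < 2 * x := by linarith
      rcases le_or_gt (x * y) (1/2) with hA | hA
      · have : y ≤ 1 / (2 * x) := by rw [le_div_iff₀ hx2]; nlinarith
        rw [h1 x y hy (Or.inr ⟨hx, this⟩)]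
        simp only [vasF]; rw [if_pos hA]
      · have hgt : 1 / (2 * x) < y := by rw [div_lt_iff₀ hx2]; nlinarith
        rcases le_or_gt (x * y) 1 with hB | hB
        · have hle : y ≤ 1 / x := by rw [le_div_iff₀ hx]; nlinarith
          rw [h2 x y hx hgt hle]
          simp only [vasF]; rw [if_neg (not_le.mpr hA), if_pos hB]
        · have hlt : 1 / x < y := by rw [div_lt_iff₀ hx]; nlinarith
          rw [h3 x y hx hlt]
          simp only [vasF]; rw [if_neg (not_le.mpr hA), if_neg (not_le.mpr hB)]
  -- the inf values
  have hinf1 : ∀ x : ℝ, x ≤ 0 → sInf (u x '' Set.Ici (0 : ℝ)) = 1 := by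
    intro x hx
    have hleast : IsLeast (u x '' Set.Ici (0 : ℝ)) 1 := by
      constructor
      · exact ⟨0, Set.self_mem_Ici, by rw [h1 x 0 le_rfl (Or.inl hx)]; norm_num⟩
      · rintro z ⟨y, hy, rfl⟩
        rw [h1 x y hy (Or.inl hx)]
        simp only [Set.mem_Ici] at hy; linarith
    exact hleast.csInf_eq
  have hinf2 : ∀ x : ℝ, 0 < x → sInf (u x '' Set.Ici (0 : ℝ)) = 0 := by
    intro x hx
    have hx' : x ≠ 0 := hx.ne'
    have hxinv : (0:ℝ) < 1 / x := by positivity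
    have hlt : 1 / (2 * x) < 1 / x := by
      rw [div_lt_div_iff₀ (by linarith) hx]; nlinarith
    have hval : u x (1/x) = 0 := by
      rw [h2 x (1/x) hx hlt le_rfl]
      field_simp
      ring
    have hleast : IsLeast (u x '' Set.Ici (0 : ℝ)) 0 := by
      constructor
      · exact ⟨1/x, hxinv.le, hval⟩
      · rintro z ⟨y, hy, rfl⟩
        simp only [Set.mem_Ici] at hy
        rcases le_or_gt y (1 / (2 * x)) with hc | hc
        · rw [h1 x y hy (Or.inr ⟨hx, hc⟩)]; linarith
        · rcases le_or_gt y (1 / x) with hd | hd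
          · rw [h2 x y hx hc hd]
            have e1 : (2*x+1) * y ≤ (2*x+1) * (1/x) :=
              mul_le_mul_of_nonneg_left hd (by linarith)
            have e2 : (2*x+1) * (1/x) = 2 + 1/x := by field_simp
            linarith
          · rw [h3 x y hx hd]; linarith
    exact hleast.csInf_eq
  refine ⟨?_, ?_, hinf1, hinf2, ?_⟩
  · -- continuity
    apply ContinuousOn.congr (f := fun p : ℝ × ℝ => vasF p)
    · exact fun p hp => (vasF_contAt p hp).continuousWithinAt
    · intro p hp
      exact key p.1 p.2 hp
  · -- inf-compactness
    intro x lam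
    have hsetEq : {y : ℝ | 0 ≤ y ∧ u x y ≤ lam} = {y : ℝ | 0 ≤ y ∧ vasF (x, y) ≤ lam} := by
      ext y
      exact and_congr_right fun hy => by rw [key x y hy]
    rw [hsetEq]
    have hbound : ∀ y : ℝ, 0 ≤ y → vasF (x, y) ≤ lam → y ≤ |lam| + |1/x| + 1 := by
      intro y hy hF
      have hal := le_abs_self lam
      have hai := le_abs_self (1/x)
      have han : (0:ℝ) ≤ |1/x| := abs_nonneg _
      have hal' : (0:ℝ) ≤ |lam| := abs_nonneg _
      simp only [vasF] at hF
      split_ifs at hF with hA hB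
      · linarith
      · push_neg at hA
        have hxpos : 0 < x := by nlinarith
        have : y ≤ 1 / x := by rw [le_div_iff₀ hxpos]; nlinarith
        linarith
      · push_neg at hA hB
        have hxpos : 0 < x := by nlinarith
        linarith
    have hclosed : IsClosed {y : ℝ | 0 ≤ y ∧ vasF (x, y) ≤ lam} := by
      have hcont : ContinuousOn (fun y : ℝ => vasF (x, y)) (Set.Ici 0) := by
        intro y hy
        exact ((vasF_contAt (x, y) hy).comp
          ((continuous_const.prodMk continuous_id).continuousAt)).continuousWithinAt
      have heq : {y : ℝ | 0 ≤ y ∧ vasF (x, y) ≤ lam}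
          = Set.Ici 0 ∩ (fun y : ℝ => vasF (x, y)) ⁻¹' Set.Iic lam := rfl
      rw [heq]
      exact hcont.preimage_isClosed_of_isClosed isClosed_Ici (isClosed_Iic (a := lam))
    apply (isCompact_Icc (a := (0:ℝ)) (b := |lam| + |1/x| + 1)).of_isClosed_subset hclosed
    rintro y ⟨hy, hF⟩
    exact ⟨hy, hbound y hy hF⟩
  · -- not lower semicontinuous
    intro hl
    have h0 : sInf (u 0 '' Set.Ici (0 : ℝ)) = 1 := hinf1 0 le_rfl
    have hev := hl (1/2) (by
      show (1:ℝ)/2 < sInf (u 0 '' Set.Ici (0:ℝ))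
      rw [h0]; norm_num)
    have hev' : ∀ᶠ x in 𝓝[>] (0:ℝ),
        (1:ℝ)/2 < sInf (u x '' Set.Ici (0 : ℝ)) := hev.filter_mono nhdsWithin_le_nhds
    obtain ⟨x, hx1, hx2⟩ := (hev'.and (eventually_mem_nhdsWithin)).exists
    rw [hinf2 x hx2] at hx1
    linarith
end

section
/- Let h : ℝ → [0,∞) be convex with h(0) = 0 and h(z) → +∞ as |z| → ∞, let T : ℝ → ℝ be convex, continuous, and nondecreasing, and let D be a nonnegative random variable. Let g : ℝ → [0,∞) be continuous and convex with E[g(T(z−D))] < +∞ for every z. If f : ℝ → [0,∞) is continuous with f ≤ g, then the function F(z) = E[f(T(z−D))] is finite and continuous on ℝ. -/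
open Filter Topology Set MeasureTheory

/-!
For `|z - z₀| ≤ 1` monotonicity of `T` puts `T (z - D)` between `T (z₀ - 1 - D)` and
`T (z₀ + 1 - D)`, so by the maximum principle for the convex `g` the integrand `f (T (z - D))`
is dominated by the integrable `g (T (z₀ - 1 - D)) + g (T (z₀ + 1 - D))`; dominated convergence
then gives continuity.
-/

lemma ConvexOn.comp_le_add_of_mem_Icc {g T : ℝ → ℝ} (hg : ConvexOn ℝ univ g)
    (hgnn : ∀ z, 0 ≤ g z) (hT : Monotone T) {a b y : ℝ} (hy : y ∈ Icc a b) :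
    g (T y) ≤ g (T a) + g (T b) :=
  calc g (T y) ≤ max (g (T a)) (g (T b)) :=
        hg.le_max_of_mem_Icc (mem_univ _) (mem_univ _) ⟨hT hy.1, hT hy.2⟩
    _ ≤ g (T a) + g (T b) := max_le_add_of_nonneg (hgnn _) (hgnn _)

section Translates

variable {Ω : Type*} [MeasurableSpace Ω] {μ : Measure Ω} {D : Ω → ℝ}

lemma aestronglyMeasurable_comp_sub {φ : ℝ → ℝ} (hφ : Continuous φ) (hD : Measurable D)
    (z : ℝ) : AEStronglyMeasurable (fun ω => φ (z - D ω)) μ :=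
  ((hφ.comp (continuous_const.sub continuous_id)).measurable.comp hD).aestronglyMeasurable

lemma integrable_comp_sub_of_norm_le {φ ψ : ℝ → ℝ} (hφ : Continuous φ) (hD : Measurable D)
    (hφψ : ∀ y, ‖φ y‖ ≤ ψ y) {z : ℝ} (hψ : Integrable (fun ω => ψ (z - D ω)) μ) :
    Integrable (fun ω => φ (z - D ω)) μ :=
  hψ.mono' (aestronglyMeasurable_comp_sub hφ hD z) (ae_of_all _ fun _ => hφψ _)

lemma continuous_integral_comp_sub {φ ψ : ℝ → ℝ} (hφ : Continuous φ) (hD : Measurable D)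
    (hψ : ∀ z, Integrable (fun ω => ψ (z - D ω)) μ)
    (hbound : ∀ a b y, y ∈ Icc a b → ‖φ y‖ ≤ ψ a + ψ b) :
    Continuous fun z => ∫ ω, φ (z - D ω) ∂μ := by
  refine continuous_iff_continuousAt.2 fun z₀ => continuousAt_of_dominated
    (bound := fun ω => ψ (z₀ - 1 - D ω) + ψ (z₀ + 1 - D ω))
    (Eventually.of_forall (aestronglyMeasurable_comp_sub hφ hD)) ?_ ((hψ _).add (hψ _))
    (ae_of_all _ fun ω => (hφ.comp (continuous_id.sub continuous_const)).continuousAt)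
  filter_upwards [Icc_mem_nhds (sub_one_lt z₀) (lt_add_one z₀)] with z hz
  exact ae_of_all _ fun ω => hbound _ _ _ ⟨by linarith [hz.1], by linarith [hz.2]⟩

end Translates

theorem stmt18_general {Ω : Type*} [MeasurableSpace Ω] (μ : Measure Ω)
    (D : Ω → ℝ) (hD : Measurable D)
    (T : ℝ → ℝ) (hTc : Continuous T) (hTm : Monotone T)
    (g : ℝ → ℝ) (hgcvx : ConvexOn ℝ Set.univ g) (hgnn : ∀ z, 0 ≤ g z)
    (hgint : ∀ z : ℝ, Integrable (fun ω => g (T (z - D ω))) μ)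
    (f : ℝ → ℝ) (hfc : Continuous f) (hfnn : ∀ z, 0 ≤ f z) (hfg : ∀ z, f z ≤ g z) :
    (∀ z : ℝ, Integrable (fun ω => f (T (z - D ω))) μ) ∧
    Continuous (fun z : ℝ => ∫ ω, f (T (z - D ω)) ∂μ) := by
  have hnorm : ∀ y, ‖f (T y)‖ ≤ g (T y) := fun y =>
    (Real.norm_of_nonneg (hfnn _)).trans_le (hfg _)
  exact ⟨fun z => integrable_comp_sub_of_norm_le (hfc.comp hTc) hD hnorm (hgint z),
    continuous_integral_comp_sub (hfc.comp hTc) hD hgint fun a b y hy =>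
      (hnorm y).trans (hgcvx.comp_le_add_of_mem_Icc hgnn hTm hy)⟩

/-- If a continuous nonnegative function `f` is bounded above by a continuous convex nonnegative
function `g` with `E[g(T(z − D))] < ∞` for every `z`, where `T` is convex, continuous and
nondecreasing and `D` is a nonnegative random variable, then `F(z) = E[f(T(z − D))]` is finite
(i.e. the integrand is integrable) and continuous on `ℝ`. -/
theorem stmt18 {Ω : Type*} [MeasurableSpace Ω] (μ : Measure Ω) [IsProbabilityMeasure μ]
    (D : Ω → ℝ) (hD : Measurable D) (hDnn : ∀ ω, 0 ≤ D ω)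
    (h : ℝ → ℝ) (hhcvx : ConvexOn ℝ Set.univ h) (hh0 : h 0 = 0) (hhnn : ∀ z, 0 ≤ h z)
    (hhtop : Tendsto h atTop atTop) (hhbot : Tendsto h atBot atTop)
    (T : ℝ → ℝ) (hTcvx : ConvexOn ℝ Set.univ T) (hTc : Continuous T) (hTm : Monotone T)
    (g : ℝ → ℝ) (hgc : Continuous g) (hgcvx : ConvexOn ℝ Set.univ g) (hgnn : ∀ z, 0 ≤ g z)
    (hgint : ∀ z : ℝ, Integrable (fun ω => g (T (z - D ω))) μ)
    (f : ℝ → ℝ) (hfc : Continuous f) (hfnn : ∀ z, 0 ≤ f z) (hfg : ∀ z, f z ≤ g z) :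
    (∀ z : ℝ, Integrable (fun ω => f (T (z - D ω))) μ) ∧
    Continuous (fun z : ℝ => ∫ ω, f (T (z - D ω)) ∂μ) :=
  stmt18_general μ D hD T hTc hTm g hgcvx hgnn hgint f hfc hfnn hfg
end
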